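/- Let f̃ : ℝ^b → ℝ^b be an A-equivariant lift, and let x̃, x̃' ∈ ℝ^b and m, m' ∈ ℤ^b satisfy f̃(x̃) = x̃ + m and f̃(x̃') = x̃' + m' (so the projections of x̃ and x̃' are fixed points of the induced map f : 𝕋^b → 𝕋^b). Then m − m' ∈ (A − I)ℤ^b if and only if there exist k, p, q ∈ ℤ^b such that the lift g̃ of f defined by g̃(z̃) = f̃(z̃) + k fixes both x̃ + p and x̃' + q. In other words, two fixed points of f have the same displacement class in ℤ^b/(A − I)ℤ^b if and only if some common lift of f fixes a lift of each of them. -/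

import Mathlib

/-!
By `A`-equivariance, the lift `f̃ + k` fixes the translate `x̃ + p` of a fixed point with
displacement `m` exactly when `m + (A − I)p + k = 0`. Hence a single `k` serves both fixed points
iff `−k` lies in `m + (A − I)ℤ^b` and in `m' + (A − I)ℤ^b`, i.e. iff these cosets coincide.
-/

open Matrix Filter

/-- The coercion of an integer vector to a real vector. -/
noncomputable def intVec {b : ℕ} (n : Fin b → ℤ) : Fin b → ℝ := fun i => (n i : ℝ)

/-- The integer lattice `ℤ^b` as an additive subgroup of `ℝ^b`. -/
def latticeZ (b : ℕ) : AddSubgroup (Fin b → ℝ) where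
  carrier := Set.range (fun n : Fin b → ℤ => intVec n)
  add_mem' := by rintro _ _ ⟨m, rfl⟩ ⟨n, rfl⟩; exact ⟨m + n, by funext i; simp [intVec]⟩
  zero_mem' := ⟨0, by funext i; simp [intVec]⟩
  neg_mem' := by rintro _ ⟨n, rfl⟩; exact ⟨-n, by funext i; simp [intVec]⟩

/-- The torus `𝕋^b = ℝ^b / ℤ^b`. -/
abbrev Torus (b : ℕ) := (Fin b → ℝ) ⧸ latticeZ b

/-- The projection `π : ℝ^b → 𝕋^b`. -/
noncomputable def projT (b : ℕ) : (Fin b → ℝ) →+ Torus b := QuotientAddGroup.mk' (latticeZ b)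

/-- The real matrix associated to an integer matrix. -/
noncomputable def realMat {b : ℕ} (A : Matrix (Fin b) (Fin b) ℤ) : Matrix (Fin b) (Fin b) ℝ :=
  A.map (Int.cast)

theorem intVec_add {b : ℕ} (a c : Fin b → ℤ) : intVec (a + c) = intVec a + intVec c := by
  funext i; simp [intVec]

theorem intVec_injective {b : ℕ} : Function.Injective (intVec (b := b)) := fun _ _ h =>
  funext fun i => by simpa [intVec] using congrFun h i

theorem realMat_mulVec_intVec {b : ℕ} (A : Matrix (Fin b) (Fin b) ℤ) (n : Fin b → ℤ) :
    realMat A *ᵥ intVec n = intVec (A *ᵥ n) := by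
  funext i; simp [realMat, intVec, mulVec, dotProduct]

theorem add_intVec_fixes_add_intVec_iff {b : ℕ} {A : Matrix (Fin b) (Fin b) ℤ}
    {f : (Fin b → ℝ) → (Fin b → ℝ)}
    (hequiv : ∀ (x : Fin b → ℝ) (n : Fin b → ℤ), f (x + intVec n) = f x + realMat A *ᵥ intVec n)
    {x : Fin b → ℝ} {m : Fin b → ℤ} (hx : f x = x + intVec m) (k p : Fin b → ℤ) :
    f (x + intVec p) + intVec k = x + intVec p ↔ m + (A - 1) *ᵥ p + k = 0 := by
  rw [hequiv, hx, realMat_mulVec_intVec]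
  calc _ ↔ intVec (m + A *ᵥ p + k) = intVec p := by
          rw [intVec_add, intVec_add]; constructor <;> intro h <;> linear_combination h
    _ ↔ m + A *ᵥ p + k = p := intVec_injective.eq_iff
    _ ↔ _ := by rw [sub_mulVec, one_mulVec]; constructor <;> intro h <;> linear_combination h

theorem stmt6_general (b : ℕ) (A : Matrix (Fin b) (Fin b) ℤ)
    (f : (Fin b → ℝ) → (Fin b → ℝ))
    (hequiv : ∀ (x : Fin b → ℝ) (n : Fin b → ℤ),
      f (x + intVec n) = f x + (realMat A).mulVec (intVec n))
    (x x' : Fin b → ℝ) (m m' : Fin b → ℤ)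
    (hx : f x = x + intVec m) (hx' : f x' = x' + intVec m') :
    (∃ w : Fin b → ℤ, m - m' = (A - 1).mulVec w) ↔
    ∃ k p q : Fin b → ℤ,
      f (x + intVec p) + intVec k = x + intVec p ∧
      f (x' + intVec q) + intVec k = x' + intVec q := by
  simp only [add_intVec_fixes_add_intVec_iff hequiv hx, add_intVec_fixes_add_intVec_iff hequiv hx']
  constructor
  · rintro ⟨w, hw⟩
    exact ⟨-m, 0, w, by simp, by linear_combination -hw⟩
  · rintro ⟨k, p, q, hp, hq⟩
    exact ⟨q - p, by rw [mulVec_sub]; linear_combination hp - hq⟩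

/-- Two fixed points of the induced torus map have the same displacement class in
`ℤ^b/(A − I)ℤ^b` if and only if some common lift of the map fixes a lift of each of them. -/
theorem stmt6 (b : ℕ) (hb : 1 ≤ b) (A : Matrix (Fin b) (Fin b) ℤ)
    (f : (Fin b → ℝ) → (Fin b → ℝ)) (hcont : Continuous f)
    (hequiv : ∀ (x : Fin b → ℝ) (n : Fin b → ℤ),
      f (x + intVec n) = f x + (realMat A).mulVec (intVec n))
    (x x' : Fin b → ℝ) (m m' : Fin b → ℤ)
    (hx : f x = x + intVec m) (hx' : f x' = x' + intVec m') :
    (∃ w : Fin b → ℤ, m - m' = (A - 1).mulVec w) ↔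
    ∃ k p q : Fin b → ℤ,
      f (x + intVec p) + intVec k = x + intVec p ∧
      f (x' + intVec q) + intVec k = x' + intVec q :=
  stmt6_general b A f hequiv x x' m m' hx hx'
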